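/- arXiv:gr-qc/0110121 — 2 statements merged into one kernel-verified Lean document; each statement's English description precedes it below -/
import Mathlib

section
/- Well-definedness of the negation on the projection operator cohomology (subspace form): let E₀ and M be mutually orthogonal linear subspaces of E, let A be a linear subspace of E₀ and G a linear subspace of M, and set K = E₀ ⊔ M. Then K ⊓ (A ⊔ G)ᗮ = (E₀ ⊓ Aᗮ) ⊔ (M ⊓ Gᗮ), where ᗮ denotes the orthogonal complement in E and ⊔, ⊓ are join and meet of subspaces. -/
open scoped InnerProductSpace

/-- Well-definedness of the negation on the projection operator
cohomology (subspace form): with `E₀ ⊥ M`, `A ≤ E₀`, `G ≤ M` and `K = E₀ ⊔ M`,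
`K ⊓ (A ⊔ G)ᗮ = (E₀ ⊓ Aᗮ) ⊔ (M ⊓ Gᗮ)`. -/
theorem negation_well_defined_on_cohomology
    {E : Type*} [NormedAddCommGroup E] [InnerProductSpace ℂ E]
    (E₀ M : Submodule ℂ E)
    (horth : ∀ x ∈ E₀, ∀ y ∈ M, ⟪x, y⟫_ℂ = 0)
    (A G : Submodule ℂ E) (hA : A ≤ E₀) (hG : G ≤ M)
    (K : Submodule ℂ E) (hK : K = E₀ ⊔ M) :
    K ⊓ (A ⊔ G)ᗮ = (E₀ ⊓ Aᗮ) ⊔ (M ⊓ Gᗮ) := by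
  subst hK
  apply le_antisymm
  · rintro x ⟨hxK, hxO⟩
    obtain ⟨a, ha, m, hm, rfl⟩ := Submodule.mem_sup.mp hxK
    rw [SetLike.mem_coe, Submodule.mem_orthogonal] at hxO
    have hAO : a ∈ Aᗮ := by
      rw [Submodule.mem_orthogonal]
      intro y hy
      have h1 : ⟪y, m⟫_ℂ = 0 := horth y (hA hy) m hm
      have h2 : ⟪y, a + m⟫_ℂ = 0 := hxO y (Submodule.mem_sup_left hy)
      rwa [inner_add_right, h1, add_zero] at h2
    have hGO : m ∈ Gᗮ := by
      rw [Submodule.mem_orthogonal]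
      intro y hy
      have h1 : ⟪a, y⟫_ℂ = 0 := horth a ha y (hG hy)
      have h1' : ⟪y, a⟫_ℂ = 0 := by rw [← inner_conj_symm, h1, map_zero]
      have h2 : ⟪y, a + m⟫_ℂ = 0 := hxO y (Submodule.mem_sup_right hy)
      rwa [inner_add_right, h1', zero_add] at h2
    exact Submodule.add_mem_sup ⟨ha, hAO⟩ ⟨hm, hGO⟩
  · apply sup_le
    · rintro x ⟨hx0, hxA⟩
      refine ⟨Submodule.mem_sup_left hx0, ?_⟩
      rw [SetLike.mem_coe, Submodule.mem_orthogonal]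
      intro y hy
      obtain ⟨a, ha, g, hg, rfl⟩ := Submodule.mem_sup.mp hy
      have h1 : ⟪a, x⟫_ℂ = 0 := hxA a ha
      have h2 : ⟪g, x⟫_ℂ = 0 := by
        have h := horth x hx0 g (hG hg)
        rw [← inner_conj_symm, h, map_zero]
      rw [inner_add_left, h1, h2, add_zero]
    · rintro x ⟨hxM, hxG⟩
      refine ⟨Submodule.mem_sup_right hxM, ?_⟩
      rw [SetLike.mem_coe, Submodule.mem_orthogonal]
      intro y hy
      obtain ⟨a, ha, g, hg, rfl⟩ := Submodule.mem_sup.mp hy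
      have h1 : ⟪g, x⟫_ℂ = 0 := hxG g hg
      have h2 : ⟪a, x⟫_ℂ = 0 := horth a (hA ha) x hxM
      rw [inner_add_left, h1, h2, add_zero]
end

section
/- Gauge-fixed decoherence functionals reduce to the cohomology (main theorem, abstract form): let d be a complex-valued function on pairs of continuous linear operators on E satisfying (i) additivity: d(p + q, r) = d(p, r) + d(q, r) whenever p, q are orthogonal projections with p∘q = 0 and q∘p = 0 and r is an orthogonal projection; (ii) hermiticity: d(p, q) = conjugate of d(q, p) for all orthogonal projections p, q; and (iii) d(r, γ) = 0 for every orthogonal projection r and every BRST-exact orthogonal projection γ. Let α₀, β₀ be orthogonal projections and γ_α, γ_β BRST-exact orthogonal projections disjoint from α₀, respectively β₀. Then d(α₀ + γ_α, β₀ + γ_β) = d(α₀, β₀). -/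
/-- STATEMENT 10: Gauge-fixed decoherence functionals reduce to the cohomology
(main theorem, abstract form): an additive, hermitian functional vanishing on
BRST-exact orthogonal projections satisfies
`d (α₀ + γ_α) (β₀ + γ_β) = d α₀ β₀`. -/
theorem gauge_fixed_decoherence_reduces
    {E : Type*} [NormedAddCommGroup E] [InnerProductSpace ℂ E] [CompleteSpace E]
    (Ω : E →L[ℂ] E)
    (d : (E →L[ℂ] E) → (E →L[ℂ] E) → ℂ)
    -- (i) additivity on disjoint orthogonal projections
    (hadd : ∀ p q r : E →L[ℂ] E,
      IsSelfAdjoint p → p * p = p → IsSelfAdjoint q → q * q = q →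
      IsSelfAdjoint r → r * r = r → p * q = 0 → q * p = 0 →
      d (p + q) r = d p r + d q r)
    -- (ii) hermiticity
    (therm : ∀ p q : E →L[ℂ] E,
      IsSelfAdjoint p → p * p = p → IsSelfAdjoint q → q * q = q →
      d p q = starRingEnd ℂ (d q p))
    -- (iii) vanishing on BRST-exact orthogonal projections
    (hexact : ∀ r γ : E →L[ℂ] E,
      IsSelfAdjoint r → r * r = r → IsSelfAdjoint γ → γ * γ = γ →
      (∃ Q : E →L[ℂ] E, γ = Ω * Q - Q * Ω) → d r γ = 0)
    -- the data: primitive parts and disjoint exact parts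
    (α₀ β₀ γα γβ : E →L[ℂ] E)
    (hα₀sa : IsSelfAdjoint α₀) (hα₀idem : α₀ * α₀ = α₀)
    (hβ₀sa : IsSelfAdjoint β₀) (hβ₀idem : β₀ * β₀ = β₀)
    (hγαsa : IsSelfAdjoint γα) (hγαidem : γα * γα = γα)
    (hγαexact : ∃ Q : E →L[ℂ] E, γα = Ω * Q - Q * Ω)
    (hγβsa : IsSelfAdjoint γβ) (hγβidem : γβ * γβ = γβ)
    (hγβexact : ∃ Q : E →L[ℂ] E, γβ = Ω * Q - Q * Ω)
    (hγαα : γα * α₀ = 0) (hαγα : α₀ * γα = 0)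
    (hγββ : γβ * β₀ = 0) (hβγβ : β₀ * γβ = 0) :
    d (α₀ + γα) (β₀ + γβ) = d α₀ β₀ := by

  have hbsum_sa : IsSelfAdjoint (β₀ + γβ) := hβ₀sa.add hγβsa
  have hbsum_idem : (β₀ + γβ) * (β₀ + γβ) = β₀ + γβ := by
    rw [add_mul, mul_add, mul_add, hβ₀idem, hγβidem, hβγβ, hγββ, add_zero, zero_add]
  have h1 := hadd α₀ γα (β₀ + γβ) hα₀sa hα₀idem hγαsa hγαidem hbsum_sa hbsum_idem hαγα hγαα
  have h2 : d γα (β₀ + γβ) = 0 := by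
    rw [therm γα (β₀ + γβ) hγαsa hγαidem hbsum_sa hbsum_idem,
      hexact (β₀ + γβ) γα hbsum_sa hbsum_idem hγαsa hγαidem hγαexact, map_zero]
  have h3 : d α₀ (β₀ + γβ) = d α₀ β₀ := by
    rw [therm α₀ (β₀ + γβ) hα₀sa hα₀idem hbsum_sa hbsum_idem,
      hadd β₀ γβ α₀ hβ₀sa hβ₀idem hγβsa hγβidem hα₀sa hα₀idem hβγβ hγββ,
      therm γβ α₀ hγβsa hγβidem hα₀sa hα₀idem,
      hexact α₀ γβ hα₀sa hα₀idem hγβsa hγβidem hγβexact, map_zero, add_zero,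
      ← therm α₀ β₀ hα₀sa hα₀idem hβ₀sa hβ₀idem]
  rw [h1, h2, h3, add_zero]
end
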